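/- Let G be a topological group equipped with its Borel σ-algebra such that the multiplication map G × G → G is measurable, let μ be a finite tight Borel measure on G, and let Θ be a continuous right-invariant pseudometric on G. Then there exists a continuous right-invariant pseudometric Δ on G such that for all finite Borel measures ν, ν' on G: sup { |∫ f d(μ ⋆ ν) − ∫ f d(μ ⋆ ν')| : f ∈ BLip_b(Θ) } ≤ μ(G) · sup { |∫ f dν − ∫ f dν'| : f ∈ BLip_b(Δ) }. -/

import Mathlib

def IsPseudometric {X : Type*} (d : X → X → ℝ) : Prop :=
  (∀ x, d x x = 0) ∧ (∀ x y, d x y = d y x) ∧ (∀ x y, 0 ≤ d x y) ∧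
    (∀ x y z, d x z ≤ d x y + d y z)

def BLipb {X : Type*} (d : X → X → ℝ) : Set (X → ℝ) :=
  {f | (∀ x, f x ∈ Set.Icc (-1 : ℝ) 1) ∧ ∀ x y, |f x - f y| ≤ d x y}

def RightInvariant {G : Type*} [Group G] (d : G → G → ℝ) : Prop :=
  ∀ x y z : G, d (x * z) (y * z) = d x y

def LeftInvariant {G : Type*} [Group G] (d : G → G → ℝ) : Prop :=
  ∀ x y z : G, d (z * x) (z * y) = d x y

def ContPseudometric {G : Type*} [TopologicalSpace G] (d : G → G → ℝ) : Prop :=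
  Continuous fun p : G × G => d p.1 p.2

def IsSIN (G : Type*) [Group G] [TopologicalSpace G] : Prop :=
  ∀ U ∈ nhds (1 : G), ∃ (d : G → G → ℝ) (ε : ℝ), IsPseudometric d ∧
    ContPseudometric d ∧ LeftInvariant d ∧ RightInvariant d ∧ 0 < ε ∧
    {x : G | d x 1 < ε} ⊆ U

def IsTightMeas {G : Type*} [TopologicalSpace G] [MeasurableSpace G]
    (μ : MeasureTheory.Measure G) : Prop :=
  ∀ ε : ℝ, 0 < ε → ∃ K : Set G, IsCompact K ∧ μ Kᶜ < ENNReal.ofReal ε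

noncomputable def measConv {G : Type*} [Monoid G] [MeasurableSpace G]
    (μ ν : MeasureTheory.Measure G) : MeasureTheory.Measure G :=
  (μ.prod ν).map fun p : G × G => p.1 * p.2

/-!
Let `c = μ(G)` and `Δ(y, y') = c⁻¹ ∫ min 2 (Θ(xy, xy')) dμ(x)`. For `f ∈ BLip_b(Θ)` the average
`g(y) = c⁻¹ ∫ f(xy) dμ(x)` lies in `BLip_b(Δ)`, and Fubini gives `∫ f d(μ ⋆ ν) = c ∫ g dν`; the
estimate follows. `Δ` inherits right invariance from `Θ`. It is continuous because `μ` is tight: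
on a compact set `K` the integrand is uniformly continuous in `(y, y')` by the tube lemma, and
`Kᶜ` has small mass.
-/

open MeasureTheory Set Filter Topology Function

section Pseudometric

variable {X : Type*} {d : X → X → ℝ}

lemma IsPseudometric.comp (hd : IsPseudometric d) {Y : Type*} (φ : Y → X) :
    IsPseudometric fun y y' => d (φ y) (φ y') :=
  ⟨fun _ => hd.1 _, fun _ _ => hd.2.1 _ _, fun _ _ => hd.2.2.1 _ _,
    fun _ _ _ => hd.2.2.2 _ _ _⟩

lemma min_add_le_min_add_min {a b C : ℝ} (ha : 0 ≤ a) (hb : 0 ≤ b) (hC : 0 ≤ C) :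
    min C (a + b) ≤ min C a + min C b := by
  simp only [min_def]
  split_ifs <;> linarith

lemma abs_min_two_le {a : ℝ} (ha : 0 ≤ a) : |min 2 a| ≤ 2 :=
  abs_le.2 ⟨by linarith [le_min zero_le_two ha], min_le_left _ _⟩

lemma IsPseudometric.min_const (hd : IsPseudometric d) {C : ℝ} (hC : 0 ≤ C) :
    IsPseudometric fun x y => min C (d x y) := by
  obtain ⟨hrefl, hsymm, hnonneg, htriangle⟩ := hd
  refine ⟨fun x => by simp [hrefl, hC], fun x y => by simp only [hsymm x y],
    fun x y => le_min hC (hnonneg x y), fun x y z => ?_⟩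
  exact (min_le_min_left C (htriangle x y z)).trans
    (min_add_le_min_add_min (hnonneg x y) (hnonneg y z) hC)

lemma IsPseudometric.const_mul_integral {Y : Type*} [MeasurableSpace Y] {μ : Measure Y}
    {d : Y → X → X → ℝ} (hd : ∀ y, IsPseudometric (d y))
    (hint : ∀ x x', Integrable (fun y => d y x x') μ) {c : ℝ} (hc : 0 ≤ c) :
    IsPseudometric fun x x' => c * ∫ y, d y x x' ∂μ := by
  refine ⟨fun x => by simp [(hd _).1], fun x x' => by simp_rw [(hd _).2.1 x x'],
    fun x x' => mul_nonneg hc (integral_nonneg fun y => (hd y).2.2.1 x x'), fun x x' x'' => ?_⟩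
  rw [← mul_add, ← integral_add (hint x x') (hint x' x'')]
  exact mul_le_mul_of_nonneg_left
    (integral_mono (hint x x'') ((hint x x').add (hint x' x'')) fun y => (hd y).2.2.2 x x' x'') hc

end Pseudometric

section BLipb

variable {X : Type*} {d : X → X → ℝ} {f : X → ℝ}

lemma abs_le_one_of_mem_BLipb (hf : f ∈ BLipb d) (x : X) : |f x| ≤ 1 :=
  abs_le.2 (hf.1 x)

lemma abs_sub_le_min_two_of_mem_BLipb (hf : f ∈ BLipb d) (x y : X) : |f x - f y| ≤ min 2 (d x y) :=
  le_min ((abs_sub _ _).trans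
    (by linarith [abs_le_one_of_mem_BLipb hf x, abs_le_one_of_mem_BLipb hf y])) (hf.2 x y)

lemma continuous_of_mem_BLipb [TopologicalSpace X] (hd : ContPseudometric d) (hd0 : ∀ x, d x x = 0)
    (hf : f ∈ BLipb d) : Continuous f := by
  refine continuous_iff_continuousAt.2 fun x₀ => tendsto_iff_dist_tendsto_zero.2 ?_
  have hdist : Tendsto (fun x => d x x₀) (𝓝 x₀) (𝓝 0) := by
    simpa [Function.comp_def, hd0] using
      (hd.comp (continuous_id.prodMk (continuous_const (y := x₀)))).tendsto x₀
  exact squeeze_zero (fun _ => dist_nonneg) (fun x => hf.2 x x₀) hdist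

lemma bddAbove_abs_integral_sub_image_BLipb [MeasurableSpace X] (ν ν' : Measure X)
    [IsFiniteMeasure ν] [IsFiniteMeasure ν'] :
    BddAbove ((fun f : X → ℝ => |(∫ x, f x ∂ν) - ∫ x, f x ∂ν'|) '' BLipb d) := by
  refine ⟨ν.real univ + ν'.real univ, ?_⟩
  rintro _ ⟨f, hf, rfl⟩
  have hν : ‖∫ x, f x ∂ν‖ ≤ 1 * ν.real univ :=
    norm_integral_le_of_norm_le_const (ae_of_all _ (abs_le_one_of_mem_BLipb (f := f) hf))
  have hν' : ‖∫ x, f x ∂ν'‖ ≤ 1 * ν'.real univ :=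
    norm_integral_le_of_norm_le_const (ae_of_all _ (abs_le_one_of_mem_BLipb (f := f) hf))
  rw [Real.norm_eq_abs, one_mul] at hν hν'
  linarith [abs_sub (∫ x, f x ∂ν) (∫ x, f x ∂ν')]

lemma inv_mul_integral_mem_BLipb {Y : Type*} [MeasurableSpace Y] {μ : Measure Y}
    [IsFiniteMeasure μ] {d : Y → X → X → ℝ} {F : Y → X → ℝ} (hF : ∀ y, F y ∈ BLipb (d y))
    (hFm : ∀ x, AEStronglyMeasurable (fun y => F y x) μ)
    (hdint : ∀ x x', Integrable (fun y => min 2 (d y x x')) μ) :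
    (fun x => (μ.real univ)⁻¹ * ∫ y, F y x ∂μ) ∈
      BLipb fun x x' => (μ.real univ)⁻¹ * ∫ y, min 2 (d y x x') ∂μ := by
  have hFint : ∀ x, Integrable (fun y => F y x) μ := fun x =>
    Integrable.of_bound (hFm x) 1 (ae_of_all _ fun y => abs_le_one_of_mem_BLipb (hF y) x)
  have hc : 0 ≤ (μ.real univ)⁻¹ := inv_nonneg.2 measureReal_nonneg
  refine ⟨fun x => abs_le.1 ?_, fun x x' => ?_⟩
  · have hint : ‖∫ y, F y x ∂μ‖ ≤ 1 * μ.real univ :=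
      norm_integral_le_of_norm_le_const (ae_of_all _ fun y => abs_le_one_of_mem_BLipb (hF y) x)
    rw [one_mul, Real.norm_eq_abs] at hint
    rw [abs_mul, abs_of_nonneg hc]
    exact inv_mul_le_one_of_le₀ hint measureReal_nonneg
  · rw [← mul_sub, abs_mul, abs_of_nonneg hc, ← integral_sub (hFint x) (hFint x')]
    refine mul_le_mul_of_nonneg_left ?_ hc
    simpa only [Real.norm_eq_abs] using norm_integral_le_of_norm_le (f := fun y => F y x - F y x')
      (hdint x x') (ae_of_all _ fun y => abs_sub_le_min_two_of_mem_BLipb (hF y) x x')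

end BLipb

lemma abs_integral_sub_le_of_abs_sub_le_on {X : Type*} [MeasurableSpace X] {μ : Measure X}
    [IsFiniteMeasure μ] {K : Set X} (hK : MeasurableSet K) {u v : X → ℝ} (hu : Integrable u μ)
    (hv : Integrable v μ) {η C : ℝ} (hη : 0 ≤ η) (hKη : ∀ x ∈ K, |u x - v x| ≤ η)
    (hC : ∀ x, |u x - v x| ≤ C) :
    |(∫ x, u x ∂μ) - ∫ x, v x ∂μ| ≤ η * μ.real univ + μ.real Kᶜ * C := by
  have hg : Integrable (fun x => η + Kᶜ.indicator (fun _ => C) x) μ :=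
    (integrable_const η).add ((integrable_const C).indicator hK.compl)
  have hbound : ∀ x, ‖u x - v x‖ ≤ η + Kᶜ.indicator (fun _ => C) x := fun x => by
    by_cases hx : x ∈ K
    · simpa [hx] using hKη x hx
    · simpa [indicator_of_mem (mem_compl hx)] using (hC x).trans (le_add_of_nonneg_left hη)
  rw [← integral_sub hu hv]
  refine (norm_integral_le_of_norm_le hg (ae_of_all _ hbound)).trans_eq ?_
  rw [integral_add (integrable_const η) ((integrable_const C).indicator hK.compl), integral_const,
    integral_indicator_const _ hK.compl, smul_eq_mul, smul_eq_mul, mul_comm]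

section Tight

variable {X Y : Type*} [TopologicalSpace X] [TopologicalSpace Y]

lemma eventually_forall_abs_sub_lt {h : X → Y → ℝ} (hh : Continuous (uncurry h)) {K : Set X}
    (hK : IsCompact K) (y₀ : Y) {η : ℝ} (hη : 0 < η) :
    ∀ᶠ y in 𝓝 y₀, ∀ x ∈ K, |h x y - h x y₀| < η := by
  refine hK.eventually_forall_of_forall_eventually fun x _ => ?_
  have hcont : Continuous fun z : Y × X => |h z.2 z.1 - h z.2 y₀| :=
    ((hh.comp continuous_swap).sub (hh.comp (continuous_snd.prodMk continuous_const))).abs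
  exact hcont.continuousAt.eventually_lt continuousAt_const (by simpa using hη)

lemma IsTightMeas.exists_isClosed [R1Space X] [MeasurableSpace X] {μ : Measure X}
    [IsFiniteMeasure μ] (hμ : IsTightMeas μ) {δ : ℝ} (hδ : 0 < δ) :
    ∃ K, IsCompact K ∧ IsClosed K ∧ μ.real Kᶜ < δ := by
  obtain ⟨K, hK, hKc⟩ := hμ δ hδ
  refine ⟨closure K, hK.closure, isClosed_closure, ?_⟩
  exact (measureReal_mono (compl_subset_compl.2 subset_closure)).trans_lt
    (ENNReal.toReal_lt_of_lt_ofReal hKc)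

-- Mathlib's `continuous_parametric_integral_of_continuous` needs a locally compact parameter
-- space; tightness of `μ` replaces it.
lemma continuous_integral_of_isTightMeas [R1Space X] [MeasurableSpace X]
    [OpensMeasurableSpace X] {μ : Measure X} [IsFiniteMeasure μ] (hμ : IsTightMeas μ)
    {h : X → Y → ℝ} (hh : Continuous (uncurry h)) {C : ℝ} (hC : ∀ x y, |h x y| ≤ C) :
    Continuous fun y => ∫ x, h x y ∂μ := by
  have hint : ∀ y, Integrable (fun x => h x y) μ := fun y =>
    Integrable.of_bound (hh.comp (continuous_id.prodMk continuous_const)).aestronglyMeasurable C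
      (ae_of_all _ fun x => hC x y)
  refine continuous_iff_continuousAt.2 fun y₀ => Metric.tendsto_nhds.2 fun ε hε => ?_
  set A := μ.real univ + 2 * |C| + 1
  have hA : 0 < A := by positivity
  have hδ : 0 < ε / A := div_pos hε hA
  obtain ⟨K, hK, hKcl, hKc⟩ := hμ.exists_isClosed hδ
  filter_upwards [eventually_forall_abs_sub_lt hh hK y₀ hδ] with y hy
  have hosc : ∀ x, |h x y - h x y₀| ≤ 2 * |C| := fun x => by
    linarith [abs_sub (h x y) (h x y₀), hC x y, hC x y₀, le_abs_self C]
  calc dist (∫ x, h x y ∂μ) (∫ x, h x y₀ ∂μ)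
      ≤ ε / A * μ.real univ + μ.real Kᶜ * (2 * |C|) :=
        abs_integral_sub_le_of_abs_sub_le_on hKcl.measurableSet (hint y) (hint y₀) hδ.le
          (fun x hx => (hy x hx).le) hosc
    _ ≤ ε / A * (μ.real univ + 2 * |C|) := by rw [mul_add]; gcongr
    _ < ε / A * A := by gcongr; linarith
    _ = ε := div_mul_cancel₀ ε hA.ne'

end Tight

lemma integral_measConv {G : Type*} [Monoid G] [MeasurableSpace G]
    (hmul : Measurable fun p : G × G => p.1 * p.2) (μ ν : Measure G) [IsFiniteMeasure μ]
    [IsFiniteMeasure ν] {f : G → ℝ} (hf : Measurable f) {C : ℝ} (hC : ∀ x, ‖f x‖ ≤ C) :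
    ∫ z, f z ∂(measConv μ ν) = ∫ y, ∫ x, f (x * y) ∂μ ∂ν := by
  have : MeasurableMul₂ G := ⟨hmul⟩
  have hprod : Integrable (uncurry fun x y => f (x * y)) (μ.prod ν) :=
    Integrable.of_bound (hf.comp hmul).aestronglyMeasurable C (ae_of_all _ fun p => hC _)
  rw [← integral_integral_swap hprod]
  exact integral_mconv (Integrable.of_bound hf.aestronglyMeasurable C (ae_of_all _ hC))

lemma continuous_min_two_translate {G : Type*} [Mul G] [TopologicalSpace G] [ContinuousMul G]
    {Θ : G → G → ℝ} (hcont : ContPseudometric Θ) :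
    Continuous fun q : G × (G × G) => min 2 (Θ (q.1 * q.2.1) (q.1 * q.2.2)) :=
  continuous_const.min (hcont.comp ((continuous_fst.mul (continuous_fst.comp continuous_snd)).prodMk
    (continuous_fst.mul (continuous_snd.comp continuous_snd))))

section Group

variable {G : Type*} [Group G] [MeasurableSpace G]

/-- The pseudometric `Δ` of the theorem. Truncating at `2` costs nothing, since functions in
`BLipb` oscillate by at most `2`, and makes the integrand bounded. For `μ = 0` the junk value
`0⁻¹ = 0` gives `Δ = 0`. -/
noncomputable def averagedPseudometric (μ : Measure G) (Θ : G → G → ℝ) : G → G → ℝ :=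
  fun y y' => (μ.real univ)⁻¹ * ∫ x, min 2 (Θ (x * y) (x * y')) ∂μ

noncomputable def leftAverage (μ : Measure G) (f : G → ℝ) : G → ℝ :=
  fun y => (μ.real univ)⁻¹ * ∫ x, f (x * y) ∂μ

variable {μ : Measure G} {Θ : G → G → ℝ}

lemma rightInvariant_averagedPseudometric (hri : RightInvariant Θ) :
    RightInvariant (averagedPseudometric μ Θ) := by
  intro y y' z
  simp only [averagedPseudometric, ← mul_assoc, fun a b => hri a b z]

variable [TopologicalSpace G] [BorelSpace G] [IsFiniteMeasure μ]

lemma integral_measConv_eq_mul_integral_leftAverage (hmul : Measurable fun p : G × G => p.1 * p.2)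
    (hcont : ContPseudometric Θ) (hΘ0 : ∀ x, Θ x x = 0) {f : G → ℝ} (hf : f ∈ BLipb Θ)
    (ν : Measure G) [IsFiniteMeasure ν] :
    ∫ z, f z ∂(measConv μ ν) = μ.real univ * ∫ y, leftAverage μ f y ∂ν := by
  rw [integral_measConv hmul μ ν (continuous_of_mem_BLipb hcont hΘ0 hf).measurable
    (abs_le_one_of_mem_BLipb hf), ← integral_const_mul]
  refine integral_congr_ae (ae_of_all _ fun y => ?_)
  have hbound : ‖∫ x, f (x * y) ∂μ‖ ≤ 1 * μ.real univ :=
    norm_integral_le_of_norm_le_const (ae_of_all _ fun x => abs_le_one_of_mem_BLipb hf _)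
  rw [one_mul, Real.norm_eq_abs] at hbound
  -- the inner integral is bounded by `μ.real univ`, so it vanishes when that is `0`
  rcases eq_or_ne (μ.real univ) 0 with h0 | h0
  · simp only [leftAverage, h0, zero_mul]
    exact abs_nonpos_iff.1 (h0 ▸ hbound)
  · exact (mul_inv_cancel_left₀ h0 _).symm

variable [IsTopologicalGroup G]

lemma integrable_min_two_translate (hpm : IsPseudometric Θ) (hcont : ContPseudometric Θ)
    (y y' : G) : Integrable (fun x => min 2 (Θ (x * y) (x * y'))) μ := by
  have hc : Continuous fun x => min 2 (Θ (x * y) (x * y')) :=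
    (continuous_min_two_translate hcont).comp
      (continuous_id.prodMk continuous_const : Continuous fun x : G => (x, (y, y')))
  exact Integrable.of_bound hc.aestronglyMeasurable 2
    (ae_of_all _ fun x => abs_min_two_le (hpm.2.2.1 _ _))

lemma isPseudometric_averagedPseudometric (hpm : IsPseudometric Θ) (hcont : ContPseudometric Θ) :
    IsPseudometric (averagedPseudometric μ Θ) :=
  IsPseudometric.const_mul_integral (fun x => (hpm.comp (x * ·)).min_const two_pos.le)
    (integrable_min_two_translate hpm hcont) (inv_nonneg.2 measureReal_nonneg)

lemma contPseudometric_averagedPseudometric (hμ : IsTightMeas μ) (hpm : IsPseudometric Θ)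
    (hcont : ContPseudometric Θ) : ContPseudometric (averagedPseudometric μ Θ) :=
  continuous_const.mul (continuous_integral_of_isTightMeas hμ
    (continuous_min_two_translate hcont) fun _ _ => abs_min_two_le (hpm.2.2.1 _ _))

lemma leftAverage_mem_BLipb (hpm : IsPseudometric Θ) (hcont : ContPseudometric Θ) {f : G → ℝ}
    (hf : f ∈ BLipb Θ) : leftAverage μ f ∈ BLipb (averagedPseudometric μ Θ) :=
  inv_mul_integral_mem_BLipb (d := fun x y y' => Θ (x * y) (x * y'))
    (fun _ => ⟨fun _ => hf.1 _, fun _ _ => hf.2 _ _⟩)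
    (fun y => ((continuous_of_mem_BLipb hcont hpm.1 hf).comp
      (continuous_mul_const y)).aestronglyMeasurable)
    (integrable_min_two_translate hpm hcont)

end Group

theorem conv_right_variable_estimate_general (G : Type*) [Group G] [TopologicalSpace G]
    [IsTopologicalGroup G] [MeasurableSpace G] [BorelSpace G]
    (hmul : Measurable fun p : G × G => p.1 * p.2)
    (μ : MeasureTheory.Measure G) [MeasureTheory.IsFiniteMeasure μ] (hμ : IsTightMeas μ)
    (Θ : G → G → ℝ) (hpm : IsPseudometric Θ) (hcont : ContPseudometric Θ)
    (hri : RightInvariant Θ) :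
    ∃ Δ : G → G → ℝ, IsPseudometric Δ ∧ ContPseudometric Δ ∧ RightInvariant Δ ∧
      ∀ ν ν' : MeasureTheory.Measure G, MeasureTheory.IsFiniteMeasure ν →
        MeasureTheory.IsFiniteMeasure ν' →
        sSup ((fun f : G → ℝ =>
            |(∫ x, f x ∂(measConv μ ν)) - ∫ x, f x ∂(measConv μ ν')|) '' BLipb Θ) ≤
          (μ Set.univ).toReal *
            sSup ((fun f : G → ℝ => |(∫ x, f x ∂ν) - ∫ x, f x ∂ν'|) '' BLipb Δ) := by
  refine ⟨averagedPseudometric μ Θ, isPseudometric_averagedPseudometric hpm hcont,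
    contPseudometric_averagedPseudometric hμ hpm hcont, rightInvariant_averagedPseudometric hri,
    fun ν ν' _ _ => ?_⟩
  refine Real.sSup_le ?_ (mul_nonneg measureReal_nonneg
    (Real.sSup_nonneg (by rintro _ ⟨_, _, rfl⟩; exact abs_nonneg _)))
  rintro _ ⟨f, hf, rfl⟩
  dsimp only
  rw [integral_measConv_eq_mul_integral_leftAverage hmul hcont hpm.1 hf,
    integral_measConv_eq_mul_integral_leftAverage hmul hcont hpm.1 hf, ← mul_sub, abs_mul,
    abs_of_nonneg measureReal_nonneg]
  exact mul_le_mul_of_nonneg_left (le_csSup (bddAbove_abs_integral_sub_image_BLipb ν ν')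
    ⟨_, leftAverage_mem_BLipb hpm hcont hf, rfl⟩) measureReal_nonneg

/-- for a finite tight measure μ and a continuous right-invariant
pseudometric Θ there is a continuous right-invariant pseudometric Δ such that left
convolution with μ is UEB-continuous: the Θ-distance of μ ⋆ ν and μ ⋆ ν' is bounded by
μ(G) times the Δ-distance of ν and ν'. -/
theorem conv_right_variable_estimate (G : Type*) [Group G] [TopologicalSpace G]
    [IsTopologicalGroup G] [T2Space G] [MeasurableSpace G] [BorelSpace G]
    (hmul : Measurable fun p : G × G => p.1 * p.2)
    (μ : MeasureTheory.Measure G) [MeasureTheory.IsFiniteMeasure μ] (hμ : IsTightMeas μ)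
    (Θ : G → G → ℝ) (hpm : IsPseudometric Θ) (hcont : ContPseudometric Θ)
    (hri : RightInvariant Θ) :
    ∃ Δ : G → G → ℝ, IsPseudometric Δ ∧ ContPseudometric Δ ∧ RightInvariant Δ ∧
      ∀ ν ν' : MeasureTheory.Measure G, MeasureTheory.IsFiniteMeasure ν →
        MeasureTheory.IsFiniteMeasure ν' →
        sSup ((fun f : G → ℝ =>
            |(∫ x, f x ∂(measConv μ ν)) - ∫ x, f x ∂(measConv μ ν')|) '' BLipb Θ) ≤
          (μ Set.univ).toReal *
            sSup ((fun f : G → ℝ => |(∫ x, f x ∂ν) - ∫ x, f x ∂ν'|) '' BLipb Δ) :=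
  conv_right_variable_estimate_general G hmul μ hμ Θ hpm hcont hri
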